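/- Let λ > 2, h₁ = !![1, 0; -λ, 1] (so that h₁ⁿ.z = z/(1 − nλz) for n ≥ 1), and h₂ = !![-λ/2, 1; -3λ²/4 - 1, 3λ/2] with h₂⁻¹ = !![3λ/2, -1; 3λ²/4 + 1, -λ/2]. Then there exists a bounded open disc 𝓔₂ ⊂ ℂ with center on the real axis such that: (i) the real interval [2/(2−λ), 0) is contained in 𝓔₂; (ii) for every integer n ≥ 1 and every z in the closure of 𝓔₁, 1 − nλz ≠ 0 and z/(1 − nλz) ∈ 𝓔₂; (iii) for every w in the closure of 𝓔₂, (3λ²/4 + 1)w − λ/2 ≠ 0 and ((3λ/2)w − 1)/((3λ²/4 + 1)w − λ/2) ∈ 𝓔₁. -/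

import Mathlib

/-!
Write `diameterPower p q z = (Re z - p)(Re z - q) + (Im z)²` for the power of `z` with respect to
the circle on the real diameter `[p, q]`; the open (closed) disc is where it is negative
(nonpositive). For a real Möbius map `f` with no pole on `[p, q]`,
`diameterPower (f p) (f q) (f z)` is a positive multiple of `diameterPower p q z`, so `f` maps the
closed disc on `[p, q]` onto the closed disc on `[f p, f q]`. Each inclusion of the theorem thus
reduces to comparing endpoints: the closed disc on `[u, v]` lies in the open disc on `[P, Q]` as
soon as `P < u ≤ v < Q`. The endpoint comparisons are explicit inequalities in `λ` and `nλ`.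
-/

open Complex Metric ComplexConjugate

def diameterBall (p q : ℝ) : Set ℂ := ball (((p + q) / 2 : ℝ) : ℂ) ((q - p) / 2)

def diameterClosedBall (p q : ℝ) : Set ℂ := closedBall (((p + q) / 2 : ℝ) : ℂ) ((q - p) / 2)

lemma closure_diameterBall {p q : ℝ} (hpq : p < q) :
    closure (diameterBall p q) = diameterClosedBall p q :=
  closure_ball _ (by linarith)

def diameterPower (p q : ℝ) (z : ℂ) : ℝ := (z.re - p) * (z.re - q) + z.im ^ 2

lemma diameterPower_eq_norm_sq_sub (p q : ℝ) (z : ℂ) :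
    diameterPower p q z = ‖z - ((p + q) / 2 : ℝ)‖ ^ 2 - ((q - p) / 2) ^ 2 := by
  rw [diameterPower, ← normSq_eq_norm_sq, normSq_apply]
  simp only [sub_re, sub_im, ofReal_re, ofReal_im]
  ring

lemma diameterPower_eq_re (p q : ℝ) (z : ℂ) :
    diameterPower p q z = ((z - p) * conj (z - q)).re := by
  simp only [diameterPower, mul_re, conj_re, conj_im, sub_re, sub_im, ofReal_re, ofReal_im]
  ring

lemma mem_diameterBall_iff {p q : ℝ} (hpq : p ≤ q) (z : ℂ) :
    z ∈ diameterBall p q ↔ diameterPower p q z < 0 := by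
  rw [diameterBall, mem_ball, dist_eq_norm, diameterPower_eq_norm_sq_sub, sub_neg]
  exact (sq_lt_sq₀ (norm_nonneg _) (by linarith)).symm

lemma mem_diameterClosedBall_iff {p q : ℝ} (hpq : p ≤ q) (z : ℂ) :
    z ∈ diameterClosedBall p q ↔ diameterPower p q z ≤ 0 := by
  rw [diameterClosedBall, mem_closedBall, dist_eq_norm, diameterPower_eq_norm_sq_sub, sub_nonpos]
  exact (sq_le_sq₀ (norm_nonneg _) (by linarith)).symm

lemma diameterPower_neg_of_nonpos {P Q u v : ℝ} {z : ℂ} (hPu : P < u) (huv : u ≤ v)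
    (hvQ : v < Q) (hz : diameterPower u v z ≤ 0) : diameterPower P Q z < 0 := by
  unfold diameterPower at *
  have hu : u ≤ z.re := by nlinarith [sq_nonneg z.im]
  have hv : z.re ≤ v := by nlinarith [sq_nonneg z.im]
  nlinarith [mul_nonneg (sub_nonneg.2 hu) (sub_nonneg.2 hv),
    mul_pos (sub_pos.2 hPu) (sub_pos.2 (huv.trans_lt hvQ)),
    mul_pos (sub_pos.2 (hPu.trans_le huv)) (sub_pos.2 hvQ)]

lemma mobius_sub_mobius {K : Type*} [Field K] {a b c d x y : K} (hx : c * x + d ≠ 0)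
    (hy : c * y + d ≠ 0) :
    (a * x + b) / (c * x + d) - (a * y + b) / (c * y + d)
      = (a * d - b * c) * (x - y) / ((c * x + d) * (c * y + d)) := by
  rw [div_sub_div _ _ hx hy]
  ring

lemma mobius_ne_zero_of_diameterPower_nonpos {c d p q : ℝ} {z : ℂ}
    (hpole : 0 < (c * p + d) * (c * q + d)) (hz : diameterPower p q z ≤ 0) :
    (c : ℂ) * z + d ≠ 0 := by
  -- a zero of `c z + d` is the real point `-d / c`, where `(c p + d)(c q + d) = c² (p - z)(q - z)`
  intro h
  have hc : c ≠ 0 := by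
    rintro rfl
    simp only [ofReal_zero, zero_mul, zero_add, ofReal_eq_zero] at h
    simp [h] at hpole
  have hz' : z = ((-d / c : ℝ) : ℂ) := by
    push_cast
    rw [eq_div_iff (ofReal_ne_zero.2 hc)]
    linear_combination h
  have : (c * p + d) * (c * q + d) = c ^ 2 * diameterPower p q z := by
    rw [hz', diameterPower, ofReal_re, ofReal_im]
    field_simp
    ring
  nlinarith [sq_nonneg c]

lemma diameterPower_mobius {a b c d p q : ℝ} {z : ℂ} (hz : (c : ℂ) * z + d ≠ 0)
    (hp : c * p + d ≠ 0) (hq : c * q + d ≠ 0) :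
    diameterPower ((a * p + b) / (c * p + d)) ((a * q + b) / (c * q + d))
        ((a * z + b) / (c * z + d))
      = (a * d - b * c) ^ 2 / ((c * p + d) * (c * q + d) * normSq (c * z + d))
        * diameterPower p q z := by
  have hp' : (c : ℂ) * p + d ≠ 0 := by exact_mod_cast hp
  have hq' : (c : ℂ) * q + d ≠ 0 := by exact_mod_cast hq
  rw [diameterPower_eq_re, diameterPower_eq_re]
  push_cast
  rw [mobius_sub_mobius hz hp', mobius_sub_mobius hz hq']
  have hconj : conj ((c : ℂ) * z + d) ≠ 0 := (map_ne_zero _).2 hz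
  have hnormSq : ((c : ℂ) * z + d) * conj ((c : ℂ) * z + d) = (normSq (c * z + d) : ℂ) :=
    mul_conj _
  have key : (a * d - b * c) * (z - p) / ((c * z + d) * (c * p + d))
        * conj ((a * d - b * c) * (z - q) / ((c * z + d) * (c * q + d)))
      = (((a * d - b * c) ^ 2 / ((c * p + d) * (c * q + d) * normSq (c * z + d)) : ℝ) : ℂ)
        * ((z - p) * conj (z - q)) := by
    push_cast
    rw [← hnormSq]
    simp only [map_div₀, map_mul, map_sub, map_add, conj_ofReal] at hconj ⊢
    field_simp
  rw [key, re_ofReal_mul]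

lemma mobius_mem_diameterBall {a b c d p q P Q : ℝ} (hdet : 0 ≤ a * d - b * c) (hpq : p ≤ q)
    (hpole : 0 < (c * p + d) * (c * q + d)) (hP : P < (a * p + b) / (c * p + d))
    (hQ : (a * q + b) / (c * q + d) < Q) {z : ℂ} (hz : z ∈ diameterClosedBall p q) :
    (c : ℂ) * z + d ≠ 0 ∧ (a * z + b) / (c * z + d) ∈ diameterBall P Q := by
  rw [mem_diameterClosedBall_iff hpq] at hz
  have hz0 := mobius_ne_zero_of_diameterPower_nonpos hpole hz
  have hp : c * p + d ≠ 0 := left_ne_zero_of_mul hpole.ne'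
  have hq : c * q + d ≠ 0 := right_ne_zero_of_mul hpole.ne'
  have hmono : (a * p + b) / (c * p + d) ≤ (a * q + b) / (c * q + d) := by
    rw [← sub_nonneg, mobius_sub_mobius hq hp, mul_comm (c * q + d)]
    exact div_nonneg (mul_nonneg hdet (by linarith)) hpole.le
  refine ⟨hz0, (mem_diameterBall_iff (by linarith) _).2
    (diameterPower_neg_of_nonpos hP hmono hQ ?_)⟩
  rw [diameterPower_mobius hz0 hp hq]
  exact mul_nonpos_of_nonneg_of_nonpos
    (div_nonneg (sq_nonneg _) (mul_nonneg hpole.le (normSq_nonneg _))) hz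

section Hecke

variable {lam : ℝ}

lemma ball_eq_diameterBall_E1 (hlam : 2 < lam) :
    ball (((2 * lam) / ((lam + 2) * (lam - 2)) : ℝ) : ℂ) (4 / ((lam + 2) * (lam - 2)))
      = diameterBall (2 / (lam + 2)) (2 / (lam - 2)) := by
  have h1 : lam + 2 ≠ 0 := by linarith
  have h2 : lam - 2 ≠ 0 := by linarith
  have hc : 2 * lam / ((lam + 2) * (lam - 2)) = (2 / (lam + 2) + 2 / (lam - 2)) / 2 := by
    field_simp; ring
  have hr : 4 / ((lam + 2) * (lam - 2)) = (2 / (lam - 2) - 2 / (lam + 2)) / 2 := by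
    field_simp; ring
  rw [diameterBall, hc, hr]

lemma h1_pow_mem_E2 {m : ℝ} (hlam : 2 < lam) (hm : lam ≤ m) {z : ℂ}
    (hz : z ∈ diameterClosedBall (2 / (lam + 2)) (2 / (lam - 2))) :
    1 - m * z ≠ 0 ∧
      z / (1 - m * z) ∈ diameterBall (2 / (2 - lam) - 1 / lam ^ 2) (1 / lam ^ 2) := by
  have h2 : lam - 2 ≠ 0 := by linarith
  have hA : lam + 2 - 2 * m < 0 := by linarith
  have hB : lam - 2 - 2 * m < 0 := by linarith
  have hp : -m * (2 / (lam + 2)) + 1 = (lam + 2 - 2 * m) / (lam + 2) := by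
    field_simp; ring
  have hq : -m * (2 / (lam - 2)) + 1 = (lam - 2 - 2 * m) / (lam - 2) := by
    field_simp; ring
  have hpq : 2 / (lam + 2) ≤ 2 / (lam - 2) := by gcongr; linarith
  have hpole : 0 < (-m * (2 / (lam + 2)) + 1) * (-m * (2 / (lam - 2)) + 1) := by
    rw [hp, hq]
    exact mul_pos_of_neg_of_neg (div_neg_of_neg_of_pos hA (by linarith))
      (div_neg_of_neg_of_pos hB (by linarith))
  have hP :
      2 / (2 - lam) - 1 / lam ^ 2 < (1 * (2 / (lam + 2)) + 0) / (-m * (2 / (lam + 2)) + 1) := by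
    have : (1 * (2 / (lam + 2)) + 0) / (-m * (2 / (lam + 2)) + 1) = 2 / (lam + 2 - 2 * m) := by
      rw [hp, one_mul, add_zero]; field_simp
    rw [this, div_eq_mul_one_div 2 (2 - lam), div_eq_mul_one_div 2 (lam + 2 - 2 * m)]
    have : 1 / (2 - lam) ≤ 1 / (lam + 2 - 2 * m) :=
      one_div_le_one_div_of_neg_of_le (by linarith) (by linarith)
    have : 0 < 1 / lam ^ 2 := by positivity
    linarith
  have hQ : (1 * (2 / (lam - 2)) + 0) / (-m * (2 / (lam - 2)) + 1) < 1 / lam ^ 2 := by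
    have : (1 * (2 / (lam - 2)) + 0) / (-m * (2 / (lam - 2)) + 1) = 2 / (lam - 2 - 2 * m) := by
      rw [hq, one_mul, add_zero]; field_simp
    rw [this]
    have : 0 < 1 / lam ^ 2 := by positivity
    have : 2 / (lam - 2 - 2 * m) < 0 := div_neg_of_pos_of_neg two_pos hB
    linarith
  have key := mobius_mem_diameterBall (by norm_num) hpq hpole hP hQ hz
  convert key using 2 <;> push_cast <;> ring

lemma E2_left_lt_right (hlam : 2 < lam) : 2 / (2 - lam) - 1 / lam ^ 2 < 1 / lam ^ 2 := by
  have : 2 / (2 - lam) < 0 := div_neg_of_pos_of_neg two_pos (by linarith)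
  have : 0 < 1 / lam ^ 2 := by positivity
  linarith

lemma h2_inv_denom_left_neg (hlam : 2 < lam) :
    (3 * lam ^ 2 / 4 + 1) * (2 / (2 - lam) - 1 / lam ^ 2) + -lam / 2 < 0 := by
  have : 2 / (2 - lam) < 0 := div_neg_of_pos_of_neg two_pos (by linarith)
  have : 0 < 1 / lam ^ 2 := by positivity
  nlinarith [mul_pos (by positivity : (0:ℝ) < 3 * lam ^ 2 / 4 + 1) this]

lemma h2_inv_denom_right_neg (hlam : 2 < lam) :
    (3 * lam ^ 2 / 4 + 1) * (1 / lam ^ 2) + -lam / 2 < 0 := by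
  have hl : lam ≠ 0 := by positivity
  have : (3 * lam ^ 2 / 4 + 1) * (1 / lam ^ 2) + -lam / 2
      = -((lam - 2) * (2 * lam ^ 2 + lam + 2)) / (4 * lam ^ 2) := by
    field_simp; ring
  rw [this]
  exact div_neg_of_neg_of_pos (neg_neg_of_pos (by nlinarith)) (by positivity)

lemma lt_h2_inv_left (hlam : 2 < lam) :
    2 / (lam + 2) < (3 * lam / 2 * (2 / (2 - lam) - 1 / lam ^ 2) + -1)
      / ((3 * lam ^ 2 / 4 + 1) * (2 / (2 - lam) - 1 / lam ^ 2) + -lam / 2) := by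
  have hl : lam ≠ 0 := by positivity
  have h2 : 2 - lam ≠ 0 := by linarith
  have hl0 : 0 < lam := by linarith
  have hQ : 0 < 8 * lam ^ 4 - lam ^ 3 + 2 * lam ^ 2 + 4 * lam - 8 := by
    nlinarith [mul_pos (pow_pos hl0 3) (by linarith : (0:ℝ) < 8 * lam - 1)]
  have : (3 * lam / 2 * (2 / (2 - lam) - 1 / lam ^ 2) + -1)
      / ((3 * lam ^ 2 / 4 + 1) * (2 / (2 - lam) - 1 / lam ^ 2) + -lam / 2)
      = 2 * lam * (8 * lam ^ 2 - lam - 6)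
          / (8 * lam ^ 4 - lam ^ 3 + 2 * lam ^ 2 + 4 * lam - 8) := by
    rw [div_eq_div_iff (h2_inv_denom_left_neg hlam).ne hQ.ne']
    field_simp
    ring
  rw [this, div_lt_div_iff₀ (by linarith) hQ]
  nlinarith

lemma h2_inv_right_lt (hlam : 2 < lam) :
    (3 * lam / 2 * (1 / lam ^ 2) + -1) / ((3 * lam ^ 2 / 4 + 1) * (1 / lam ^ 2) + -lam / 2)
      < 2 / (lam - 2) := by
  have hl : lam ≠ 0 := by positivity
  have hR : 0 < 2 * lam ^ 3 - 3 * lam ^ 2 - 4 := by nlinarith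
  have : (3 * lam / 2 * (1 / lam ^ 2) + -1) / ((3 * lam ^ 2 / 4 + 1) * (1 / lam ^ 2) + -lam / 2)
      = (4 * lam ^ 2 - 6 * lam) / (2 * lam ^ 3 - 3 * lam ^ 2 - 4) := by
    rw [div_eq_div_iff (h2_inv_denom_right_neg hlam).ne hR.ne']
    field_simp
    ring
  rw [this, div_lt_div_iff₀ hR (by linarith)]
  nlinarith

lemma h2_inv_mem_E1 (hlam : 2 < lam) {w : ℂ}
    (hw : w ∈ diameterClosedBall (2 / (2 - lam) - 1 / lam ^ 2) (1 / lam ^ 2)) :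
    (3 * (lam : ℂ) ^ 2 / 4 + 1) * w - lam / 2 ≠ 0 ∧
      ((3 * (lam : ℂ) / 2) * w - 1) / ((3 * (lam : ℂ) ^ 2 / 4 + 1) * w - lam / 2)
        ∈ diameterBall (2 / (lam + 2)) (2 / (lam - 2)) := by
  have key := mobius_mem_diameterBall (by ring_nf; exact zero_le_one) (E2_left_lt_right hlam).le
    (mul_pos_of_neg_of_neg (h2_inv_denom_left_neg hlam) (h2_inv_denom_right_neg hlam))
    (lt_h2_inv_left hlam) (h2_inv_right_lt hlam) hw
  convert key using 2 <;> push_cast <;> ring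

end Hecke

theorem exists_disc_E2
    (lam : ℝ) (hlam : 2 < lam)
    (E1 : Set ℂ)
    (hE1 : E1 = Metric.ball ((((2 * lam) / ((lam + 2) * (lam - 2)) : ℝ)) : ℂ)
      (4 / ((lam + 2) * (lam - 2)))) :
    ∃ (c r : ℝ) (E2 : Set ℂ), 0 < r ∧ E2 = Metric.ball ((c : ℝ) : ℂ) r ∧
      (∀ x : ℝ, 2 / (2 - lam) ≤ x → x < 0 → ((x : ℂ) ∈ E2)) ∧
      (∀ n : ℕ, 1 ≤ n → ∀ z ∈ closure E1,
        (1 : ℂ) - (n : ℂ) * lam * z ≠ 0 ∧ z / ((1 : ℂ) - (n : ℂ) * lam * z) ∈ E2) ∧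
      (∀ w ∈ closure E2,
        (3 * (lam : ℂ) ^ 2 / 4 + 1) * w - lam / 2 ≠ 0 ∧
        ((3 * (lam : ℂ) / 2) * w - 1) / ((3 * (lam : ℂ) ^ 2 / 4 + 1) * w - lam / 2) ∈ E1) := by
  rw [ball_eq_diameterBall_E1 hlam] at hE1
  have hE1' : closure E1 = diameterClosedBall (2 / (lam + 2)) (2 / (lam - 2)) := by
    rw [hE1, closure_diameterBall (by gcongr; linarith)]
  have hq : 0 < 1 / lam ^ 2 := by positivity
  have hp : 2 / (2 - lam) - 1 / lam ^ 2 < 2 / (2 - lam) := by linarith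
  have hpq := E2_left_lt_right hlam
  -- `h₁ⁿ` maps the closure of `E1` onto the closed disc on `[2/(λ+2-2nλ), 2/(λ-2-2nλ)]`,
  -- which lies in `[2/(2-λ), 0)`; `E2` widens that interval by `1/λ²` on both sides.
  refine ⟨_, _, diameterBall (2 / (2 - lam) - 1 / lam ^ 2) (1 / lam ^ 2), by linarith, rfl,
    ?_, ?_, ?_⟩
  · -- the real point `x` is the closed disc on `[x, x]`
    intro x hx hx0
    refine (mem_diameterBall_iff hpq.le _).2
      (diameterPower_neg_of_nonpos (hp.trans_le hx) le_rfl (hx0.trans hq) ?_)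
    simp [diameterPower]
  · intro n hn z hz
    rw [hE1'] at hz
    have hm : lam ≤ n * lam := le_mul_of_one_le_left (by linarith) (by exact_mod_cast hn)
    simpa using h1_pow_mem_E2 hlam hm hz
  · intro w hw
    rw [hE1]
    exact h2_inv_mem_E1 hlam (by rwa [closure_diameterBall hpq] at hw)
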